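/- arXiv:1803.07984 — 4 statements merged into one kernel-verified Lean document; each statement's English description precedes it below -/
import Mathlib

section
/- Suppose x ↦ f(x,ξ) is convex and differentiable on ℝ^d for every ξ ∈ ℝ^m. Fix x̂ ∈ ℝ^d, a tolerance ε' ≥ 0, and (y_1^ε,…,y_n^ε) ∈ S such that Ĵ(x̂) − (1/n) Σ_{k=1}^n f(x̂, ξ̂_k − y_k^ε) ≤ ε'. Define g := (1/n) Σ_{k=1}^n ∇_x f(x̂, ξ̂_k − y_k^ε), the average of the gradients of x ↦ f(x, ξ̂_k − y_k^ε) at x̂. Then g is an ε'-subgradient of Ĵ at x̂, i.e., for every z ∈ ℝ^d, Ĵ(z) ≥ Ĵ(x̂) + ⟨g, z − x̂⟩ − ε'. -/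
/-! The averaged objective `F(x) = (1/n) ∑ₖ f(x, ξ̂ₖ - yₖᵉ)` is convex and differentiable with
gradient `g`, so it lies above its tangent plane at `x̂`; being one of the functions whose
supremum is `Ĵ`, it is a minorant of `Ĵ`, and it is `ε'`-close to `Ĵ` at `x̂`. Hence
`Ĵ(z) ≥ F(z) ≥ F(x̂) + ⟪g, z - x̂⟫ ≥ Ĵ(x̂) + ⟪g, z - x̂⟫ - ε'`. -/

open scoped BigOperators

noncomputable section

/-- The scaled simplex `Δ := {v ∈ ℝ^{2mn} : v ≥ 0, ∑ᵢ vⁱ = n ε}`, where `ℝ^{2mn}` is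
modeled as functions `Fin 2 × Fin n × Fin m → ℝ` (two blocks of `n × m` entries). -/
def simplexSet (m n : ℕ) (ε : ℝ) : Set (Fin 2 × Fin n × Fin m → ℝ) :=
  {v | (∀ p, 0 ≤ v p) ∧ ∑ p, v p = (n : ℝ) * ε}

/-- The linear map `A : ℝ^{2mn} → (ℝ^m)^n`, `(A v)ₖʲ = v^{(k-1)m+j} - v^{(n+k-1)m+j}`,
i.e. the difference of the two blocks. -/
def Amap (m n : ℕ) (v : Fin 2 × Fin n × Fin m → ℝ) : Fin n → Fin m → ℝ :=
  fun k j => v (0, k, j) - v (1, k, j)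

/-- The feasible set `S := {(y₁,…,yₙ) : (1/n) ∑ₖ ‖yₖ‖₁ ≤ ε}`. -/
def feasSet (m n : ℕ) (ε : ℝ) : Set (Fin n → Fin m → ℝ) :=
  {y | (1 / (n : ℝ)) * ∑ k, ∑ j, |y k j| ≤ ε}

open scoped RealInnerProductSpace

/-- The worst-case certificate function `Ĵ(x) := sup_{y ∈ S} (1/n) ∑ₖ f(x, ξ̂ₖ - yₖ)`. -/
def certFn (m n d : ℕ) (ξ : Fin n → Fin m → ℝ) (ε : ℝ)
    (f : EuclideanSpace ℝ (Fin d) → (Fin m → ℝ) → ℝ) (x : EuclideanSpace ℝ (Fin d)) : ℝ :=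
  sSup ((fun y : Fin n → Fin m → ℝ => (1 / (n : ℝ)) * ∑ k, f x (ξ k - y k)) '' feasSet m n ε)

section EpsSubgradient

variable {E : Type*} [NormedAddCommGroup E] [InnerProductSpace ℝ E]

theorem ConvexOn.add_fderiv_sub_le {f : E → ℝ} {f' : E →L[ℝ] ℝ} {s : Set E} {x z : E}
    (hf : ConvexOn ℝ s f) (hx : x ∈ s) (hz : z ∈ s) (hf' : HasFDerivAt f f' x) :
    f x + f' (z - x) ≤ f z := by
  set L : ℝ →ᵃ[ℝ] E := AffineMap.lineMap x z
  have hline : ConvexOn ℝ (L ⁻¹' s) (f ∘ L) := hf.comp_affineMap L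
  have hderiv : HasDerivAt (f ∘ L) (f' (z - x)) 0 := by
    rw [← AffineMap.lineMap_apply_zero x z (k := ℝ)] at hf'
    exact hf'.comp_hasDerivAt 0 AffineMap.hasDerivAt_lineMap
  have hslope := hline.le_slope_of_hasDerivAt (by simpa [L] using hx) (by simpa [L] using hz)
    zero_lt_one hderiv
  simp only [slope_def_field, Function.comp_apply, AffineMap.lineMap_apply_one,
    AffineMap.lineMap_apply_zero, sub_zero, div_one, L] at hslope
  linarith

def IsEpsSubgradientAt (J : E → ℝ) (ε : ℝ) (g x : E) : Prop :=
  ∀ z, J x + ⟪g, z - x⟫ - ε ≤ J z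

theorem ConvexOn.isEpsSubgradientAt_gradient [CompleteSpace E] {f : E → ℝ} {x : E}
    (hf : ConvexOn ℝ Set.univ f) (hx : DifferentiableAt ℝ f x) :
    IsEpsSubgradientAt f 0 (gradient f x) x := fun z => by
  simpa [inner_gradient_left] using
    hf.add_fderiv_sub_le (Set.mem_univ x) (Set.mem_univ z) hx.hasFDerivAt

theorem IsEpsSubgradientAt.sum {ι : Type*} (s : Finset ι) {J : ι → E → ℝ} {ε : ι → ℝ}
    {g : ι → E} {x : E} (h : ∀ k ∈ s, IsEpsSubgradientAt (J k) (ε k) (g k) x) :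
    IsEpsSubgradientAt (fun z => ∑ k ∈ s, J k z) (∑ k ∈ s, ε k) (∑ k ∈ s, g k) x := fun z => by
  rw [sum_inner, ← Finset.sum_add_distrib, ← Finset.sum_sub_distrib]
  exact Finset.sum_le_sum fun k hk => h k hk z

theorem IsEpsSubgradientAt.const_mul {J : E → ℝ} {ε c : ℝ} {g x : E}
    (h : IsEpsSubgradientAt J ε g x) (hc : 0 ≤ c) :
    IsEpsSubgradientAt (fun z => c * J z) (c * ε) (c • g) x := fun z => by
  have := mul_le_mul_of_nonneg_left (h z) hc
  rw [real_inner_smul_left]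
  linarith

theorem IsEpsSubgradientAt.of_le_of_sub_le {F J : E → ℝ} {ε δ : ℝ} {g x : E}
    (h : IsEpsSubgradientAt F ε g x) (hFJ : ∀ z, F z ≤ J z) (hx : J x - F x ≤ δ) :
    IsEpsSubgradientAt J (ε + δ) g x := fun z => by
  linarith [h z, hFJ z]

end EpsSubgradient

theorem avg_gradient_is_eps_subgradient_general (m n d : ℕ)
    (ξ : Fin n → Fin m → ℝ) (ε : ℝ)
    (f : EuclideanSpace ℝ (Fin d) → (Fin m → ℝ) → ℝ)
    (hconv : ∀ ξ' : Fin m → ℝ, ConvexOn ℝ Set.univ fun x => f x ξ')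
    (hdiff : ∀ ξ' : Fin m → ℝ, Differentiable ℝ fun x => f x ξ')
    (hbdd : ∀ x : EuclideanSpace ℝ (Fin d), BddAbove
      ((fun y : Fin n → Fin m → ℝ => (1 / (n : ℝ)) * ∑ k, f x (ξ k - y k)) '' feasSet m n ε))
    (xhat : EuclideanSpace ℝ (Fin d)) (ε' : ℝ)
    (yε : Fin n → Fin m → ℝ) (hyε : yε ∈ feasSet m n ε)
    (hclose : certFn m n d ξ ε f xhat - (1 / (n : ℝ)) * ∑ k, f xhat (ξ k - yε k) ≤ ε') :
    ∀ z : EuclideanSpace ℝ (Fin d),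
      certFn m n d ξ ε f z ≥ certFn m n d ξ ε f xhat
        + ⟪(1 / (n : ℝ)) • (∑ k, gradient (fun x => f x (ξ k - yε k)) xhat), z - xhat⟫ - ε' := by
  have hF : IsEpsSubgradientAt (fun z => (1 / (n : ℝ)) * ∑ k, f z (ξ k - yε k)) 0
      ((1 / (n : ℝ)) • ∑ k, gradient (fun x => f x (ξ k - yε k)) xhat) xhat := by
    simpa using (IsEpsSubgradientAt.sum Finset.univ fun k _ =>
      (hconv (ξ k - yε k)).isEpsSubgradientAt_gradient (hdiff _ xhat)).const_mul
        (by positivity : (0 : ℝ) ≤ 1 / n)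
  have hFJ : ∀ z, (1 / (n : ℝ)) * ∑ k, f z (ξ k - yε k) ≤ certFn m n d ξ ε f z :=
    fun z => le_csSup (hbdd z) ⟨yε, hyε, rfl⟩
  intro z
  simpa using hF.of_le_of_sub_le hFJ hclose z

/-- if `x ↦ f(x,ξ)` is convex and differentiable and `(y₁ᵉ,…,yₙᵉ) ∈ S` is
`ε'`-optimal for the sup defining `Ĵ(xhat)`, then the average `g` of the gradients
`∇ₓ f(xhat, ξ̂ₖ - yₖᵉ)` is an `ε'`-subgradient of `Ĵ` at `xhat`. -/
theorem avg_gradient_is_eps_subgradient (m n d : ℕ) (hm : 0 < m) (hn : 0 < n)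
    (ξ : Fin n → Fin m → ℝ) (ε : ℝ) (hε : 0 < ε)
    (f : EuclideanSpace ℝ (Fin d) → (Fin m → ℝ) → ℝ)
    (hconv : ∀ ξ' : Fin m → ℝ, ConvexOn ℝ Set.univ fun x => f x ξ')
    (hdiff : ∀ ξ' : Fin m → ℝ, Differentiable ℝ fun x => f x ξ')
    (hbdd : ∀ x : EuclideanSpace ℝ (Fin d), BddAbove
      ((fun y : Fin n → Fin m → ℝ => (1 / (n : ℝ)) * ∑ k, f x (ξ k - y k)) '' feasSet m n ε))
    (xhat : EuclideanSpace ℝ (Fin d)) (ε' : ℝ) (hε' : 0 ≤ ε')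
    (yε : Fin n → Fin m → ℝ) (hyε : yε ∈ feasSet m n ε)
    (hclose : certFn m n d ξ ε f xhat - (1 / (n : ℝ)) * ∑ k, f xhat (ξ k - yε k) ≤ ε') :
    ∀ z : EuclideanSpace ℝ (Fin d),
      certFn m n d ξ ε f z ≥ certFn m n d ξ ε f xhat
        + ⟪(1 / (n : ℝ)) • (∑ k, gradient (fun x => f x (ξ k - yε k)) xhat), z - xhat⟫ - ε' :=
  avg_gradient_is_eps_subgradient_general m n d ξ ε f hconv hdiff hbdd xhat ε' yε hyε hclose
end
end

section
/- Suppose f : ℝ^d × ℝ^m → ℝ is continuous and, for every ξ ∈ ℝ^m, f(x,ξ) → +∞ as ‖x‖ → +∞. Then the worst-case certificate function Ĵ is coercive, i.e., Ĵ(x) → +∞ as ‖x‖ → +∞, and Ĵ attains its infimum: there exists x* ∈ ℝ^d with Ĵ(x*) = inf_{x ∈ ℝ^d} Ĵ(x). -/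
open scoped BigOperators

noncomputable section

open scoped RealInnerProductSpace

open Filter

/-- The feasible set is compact: it is a closed subset of a closed ball. -/
lemma feasSet_isCompact {m n : ℕ} (hn : 0 < n) (ε : ℝ) : IsCompact (feasSet m n ε) := by
  have hcl : IsClosed (feasSet m n ε) := by
    have : Continuous fun y : Fin n → Fin m → ℝ => (1 / (n : ℝ)) * ∑ k, ∑ j, |y k j| := by
      refine continuous_const.mul ?_
      exact continuous_finset_sum _ fun k _ => continuous_finset_sum _ fun j _ =>
        ((continuous_apply j).comp (continuous_apply k)).abs
    exact isClosed_Iic.preimage this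
  refine (isCompact_closedBall (0 : Fin n → Fin m → ℝ) ((n : ℝ) * ε)).of_isClosed_subset
    hcl ?_
  intro y hy
  have hn' : (0 : ℝ) < n := Nat.cast_pos.mpr hn
  have hsum : ∑ k, ∑ j, |y k j| ≤ (n : ℝ) * ε := by
    have := hy
    simp only [feasSet, Set.mem_setOf_eq] at this
    calc ∑ k, ∑ j, |y k j| = (n : ℝ) * ((1 / (n : ℝ)) * ∑ k, ∑ j, |y k j|) := by
          field_simp
      _ ≤ (n : ℝ) * ε := by nlinarith
  rw [Metric.mem_closedBall, dist_zero_right]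
  rw [pi_norm_le_iff_of_nonneg]
  · intro k
    rw [pi_norm_le_iff_of_nonneg]
    · intro j
      rw [Real.norm_eq_abs]
      calc |y k j| ≤ ∑ j', |y k j'| := Finset.single_le_sum (f := fun j' => |y k j'|)
            (fun i _ => abs_nonneg _) (Finset.mem_univ j)
        _ ≤ ∑ k', ∑ j', |y k' j'| :=
            Finset.single_le_sum (f := fun k' => ∑ j', |y k' j'|)
            (fun k' _ => Finset.sum_nonneg fun j' _ => abs_nonneg _) (Finset.mem_univ k)
        _ ≤ (n : ℝ) * ε := hsum
    · have : (0:ℝ) ≤ ∑ k', ∑ j', |y k' j'| :=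
        Finset.sum_nonneg fun _ _ => Finset.sum_nonneg fun _ _ => abs_nonneg _
      linarith
  · have : (0:ℝ) ≤ ∑ k', ∑ j', |y k' j'| :=
      Finset.sum_nonneg fun _ _ => Finset.sum_nonneg fun _ _ => abs_nonneg _
    linarith

/-- if `f` is continuous and `x ↦ f(x,ξ)` tends to `+∞` as `‖x‖ → ∞` for
every `ξ`, then the certificate function `Ĵ` is coercive and attains its infimum. -/
theorem certificate_coercive_and_attains_inf (m n d : ℕ) (hm : 0 < m) (hn : 0 < n)
    (ξ : Fin n → Fin m → ℝ) (ε : ℝ) (hε : 0 < ε)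
    (f : EuclideanSpace ℝ (Fin d) → (Fin m → ℝ) → ℝ)
    (hcont : Continuous fun p : EuclideanSpace ℝ (Fin d) × (Fin m → ℝ) => f p.1 p.2)
    (hcoer : ∀ ξ' : Fin m → ℝ,
      Tendsto (fun x => f x ξ') (comap (fun x : EuclideanSpace ℝ (Fin d) => ‖x‖) atTop) atTop) :
    Tendsto (certFn m n d ξ ε f)
        (comap (fun x : EuclideanSpace ℝ (Fin d) => ‖x‖) atTop) atTop ∧
      ∃ xs : EuclideanSpace ℝ (Fin d), certFn m n d ξ ε f xs = ⨅ x, certFn m n d ξ ε f x := by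
  have hn' : (0 : ℝ) < n := Nat.cast_pos.mpr hn
  have hK : IsCompact (feasSet m n ε) := feasSet_isCompact hn ε
  set g : EuclideanSpace ℝ (Fin d) → (Fin n → Fin m → ℝ) → ℝ :=
    fun x y => (1 / (n : ℝ)) * ∑ k, f x (ξ k - y k) with hg
  have hgcont : Continuous (Function.uncurry g) := by
    refine continuous_const.mul (continuous_finset_sum _ fun k _ => ?_)
    exact hcont.comp (continuous_fst.prodMk
      (continuous_const.sub ((continuous_apply k).comp continuous_snd)))
  have hJdef : certFn m n d ξ ε f = fun x => sSup (g x '' feasSet m n ε) := rfl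
  -- continuity of the certificate function
  have hJ : Continuous (certFn m n d ξ ε f) := by
    rw [hJdef]; exact hK.continuous_sSup hgcont
  -- 0 is feasible
  have h0 : (0 : Fin n → Fin m → ℝ) ∈ feasSet m n ε := by
    simp only [feasSet, Set.mem_setOf_eq, Pi.zero_apply, abs_zero, Finset.sum_const_zero,
      mul_zero]
    positivity
  -- lower bound on the certificate function
  have hlb : ∀ x, g x 0 ≤ certFn m n d ξ ε f x := by
    intro x
    refine le_csSup (hK.bddAbove_image ?_) (Set.mem_image_of_mem _ h0)
    exact (hgcont.comp (Continuous.prodMk_right x)).continuousOn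
  -- the lower bound is coercive
  have hlow : Tendsto (fun x => g x 0)
      (comap (fun x : EuclideanSpace ℝ (Fin d) => ‖x‖) atTop) atTop := by
    rw [tendsto_atTop]
    intro b
    have h1 : ∀ᶠ x in comap (fun x : EuclideanSpace ℝ (Fin d) => ‖x‖) atTop,
        ∀ k : Fin n, b ≤ f x (ξ k - (0 : Fin n → Fin m → ℝ) k) := by
      rw [eventually_all]
      intro k
      exact (hcoer _).eventually (eventually_ge_atTop b)
    filter_upwards [h1] with x hx
    have hsum : (n : ℝ) * b ≤ ∑ k, f x (ξ k - (0 : Fin n → Fin m → ℝ) k) := by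
      calc (n : ℝ) * b = ∑ _k : Fin n, b := by simp [mul_comm]
        _ ≤ _ := Finset.sum_le_sum fun k _ => hx k
    have : (1 / (n : ℝ)) * ((n : ℝ) * b) ≤ g x 0 := by
      rw [hg]
      exact mul_le_mul_of_nonneg_left hsum (by positivity)
    calc b = (1 / (n : ℝ)) * ((n : ℝ) * b) := by field_simp
      _ ≤ g x 0 := this
  have hcoercive : Tendsto (certFn m n d ξ ε f)
      (comap (fun x : EuclideanSpace ℝ (Fin d) => ‖x‖) atTop) atTop :=
    tendsto_atTop_mono hlb hlow
  refine ⟨hcoercive, ?_⟩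
  -- attainment of the infimum
  have hfilter : comap (fun x : EuclideanSpace ℝ (Fin d) => ‖x‖) atTop
      = cocompact (EuclideanSpace ℝ (Fin d)) := by
    rw [comap_norm_atTop, Metric.cobounded_eq_cocompact]
  obtain ⟨xs, hxs⟩ := hJ.exists_forall_le (hfilter ▸ hcoercive)
  refine ⟨xs, le_antisymm (le_ciInf hxs) ?_⟩
  exact ciInf_le ⟨certFn m n d ξ ε f xs, by rintro r ⟨x, rfl⟩; exact hxs x⟩ xs
end
end

section
/- Let J : ℝ^d → ℝ and let x* be a global minimizer of J. Let ε̂ ≥ 0, L > 0, and set μ := max{L, 1}. Let step sizes α_0, α_1, … > 0 be given, and let iterates be generated by x^{j+1} := x^j − α_j g_j / max{‖g_j‖, 1}, where each g_j ∈ ℝ^d is an ε̂-subgradient of J at x^j (i.e., J(z) ≥ J(x^j) + ⟨g_j, z − x^j⟩ − ε̂ for all z) with ‖g_j‖ ≤ L. Then for every r ≥ 0, min_{0 ≤ k ≤ r} J(x^k) − J(x*) ≤ (μ ‖x^0 − x*‖² + μ Σ_{j=0}^{r} α_j²) / (2 Σ_{j=0}^{r} α_j) + μ ε̂. -/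
/-!
Let `Δ = min_{k ≤ r} J(x^k) - J(x*)`. If `Δ ≤ ε̂` there is nothing to prove. Otherwise every
`ε̂`-subgradient inequality at `z = x*` gives `⟨g_j, x^j - x*⟩ ≥ Δ - ε̂ > 0`, and the usual
expansion of `‖x^{j+1} - x*‖²` shows that each step decreases the squared distance to `x*` by at
least `2 (α_j / μ) (Δ - ε̂)`, up to an error `α_j²`: the normalisation `max ‖g_j‖ 1` lies in
`[1, μ]`, so it caps the step length at `α_j` and shrinks the effective step size by at most `μ`.
Telescoping over `j ≤ r` and solving for `Δ` gives the bound.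
-/

open scoped RealInnerProductSpace

open Finset

theorem Finset.sum_range_le_of_le_sub_add {D b q : ℕ → ℝ} {n : ℕ}
    (h : ∀ j < n, D (j + 1) ≤ D j - b j + q j) :
    ∑ j ∈ range n, b j ≤ D 0 - D n + ∑ j ∈ range n, q j := by
  rw [← sum_range_sub', ← sum_add_distrib]
  exact sum_le_sum fun j hj => by linarith [h j (mem_range.mp hj)]

section ApproxSubgradient

variable {E : Type*} [NormedAddCommGroup E] [InnerProductSpace ℝ E]

def IsApproxSubgradient (J : E → ℝ) (ε : ℝ) (x g : E) : Prop :=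
  ∀ z, J z ≥ J x + ⟪g, z - x⟫ - ε

theorem IsApproxSubgradient.sub_sub_le_inner {J : E → ℝ} {ε : ℝ} {x g : E}
    (hg : IsApproxSubgradient J ε x g) (z : E) : J x - J z - ε ≤ ⟪g, x - z⟫ := by
  have h := hg z
  rw [← neg_sub x z, inner_neg_right] at h
  linarith

theorem norm_normalizedStep_sub_sq_le (a : ℝ) (x g z : E) :
    ‖x - (a / max ‖g‖ 1) • g - z‖ ^ 2 ≤
      ‖x - z‖ ^ 2 - 2 * (a / max ‖g‖ 1) * ⟪g, x - z⟫ + a ^ 2 := by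
  set m := max ‖g‖ 1
  have hm : 0 < m := zero_lt_one.trans_le (le_max_right _ _)
  have hstep_len : |a / m * ‖g‖| ≤ |a| := by
    rw [abs_mul, abs_div, abs_of_pos hm, abs_norm, div_mul_eq_mul_div]
    exact div_le_of_le_mul₀ hm.le (abs_nonneg a) (mul_le_mul_of_nonneg_left (le_max_left _ _)
      (abs_nonneg a))
  have hexpand : ‖x - (a / m) • g - z‖ ^ 2 =
      ‖x - z‖ ^ 2 - 2 * (a / m) * ⟪g, x - z⟫ + (a / m * ‖g‖) ^ 2 := by
    rw [sub_right_comm, norm_sub_sq_real, real_inner_smul_right, real_inner_comm, norm_smul,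
      Real.norm_eq_abs, mul_pow, sq_abs, mul_pow]
    ring
  rw [hexpand]
  have := sq_le_sq.mpr hstep_len
  linarith

theorem norm_normalizedStep_sub_sq_le_of_le_inner {a L δ : ℝ} {x g z : E} (ha : 0 ≤ a)
    (hg : ‖g‖ ≤ L) (hδ : 0 ≤ δ) (hδg : δ ≤ ⟪g, x - z⟫) :
    ‖x - (a / max ‖g‖ 1) • g - z‖ ^ 2 ≤ ‖x - z‖ ^ 2 - 2 * (a / max L 1) * δ + a ^ 2 := by
  have hscale : a / max L 1 ≤ a / max ‖g‖ 1 :=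
    div_le_div_of_nonneg_left ha (zero_lt_one.trans_le (le_max_right _ _))
      (max_le_max_right 1 hg)
  have hdecrease : a / max L 1 * δ ≤ a / max ‖g‖ 1 * ⟪g, x - z⟫ :=
    mul_le_mul hscale hδg hδ (div_nonneg ha (zero_le_one.trans (le_max_right _ _)))
  linarith [norm_normalizedStep_sub_sq_le a x g z]

theorem two_mul_mul_sum_le_of_normalizedStep {x g : ℕ → E} {α : ℕ → ℝ} {z : E} {L δ : ℝ}
    {n : ℕ} (hstep : ∀ j, x (j + 1) = x j - (α j / max ‖g j‖ 1) • g j) (hα : ∀ j, 0 ≤ α j)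
    (hbound : ∀ j, ‖g j‖ ≤ L) (hδ : 0 ≤ δ) (hinner : ∀ j < n, δ ≤ ⟪g j, x j - z⟫) :
    2 * δ * ∑ j ∈ range n, α j ≤ max L 1 * (‖x 0 - z‖ ^ 2 + ∑ j ∈ range n, α j ^ 2) := by
  have hμ : 0 < max L 1 := zero_lt_one.trans_le (le_max_right _ _)
  have htelescope := sum_range_le_of_le_sub_add (D := fun j => ‖x j - z‖ ^ 2)
    (b := fun j => 2 * (α j / max L 1) * δ) (q := fun j => α j ^ 2) fun j hj => by
      rw [hstep j]
      exact norm_normalizedStep_sub_sq_le_of_le_inner (hα j) (hbound j) hδ (hinner j hj)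
  have hsum : ∑ j ∈ range n, 2 * (α j / max L 1) * δ =
      2 * δ * (∑ j ∈ range n, α j) / max L 1 := by
    rw [mul_sum, sum_div]; exact sum_congr rfl fun j _ => by ring
  rw [hsum, div_le_iff₀ hμ] at htelescope
  nlinarith [sq_nonneg ‖x n - z‖]

end ApproxSubgradient

theorem subgradient_method_suboptimality_bound_general (d : ℕ) (J : EuclideanSpace ℝ (Fin d) → ℝ)
    (xs : EuclideanSpace ℝ (Fin d))
    (εhat L : ℝ) (hεhat : 0 ≤ εhat)
    (α : ℕ → ℝ) (hα : ∀ j, 0 < α j)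
    (x g : ℕ → EuclideanSpace ℝ (Fin d))
    (hstep : ∀ j, x (j + 1) = x j - (α j / max ‖g j‖ 1) • g j)
    (hsub : ∀ j, ∀ z : EuclideanSpace ℝ (Fin d), J z ≥ J (x j) + ⟪g j, z - x j⟫ - εhat)
    (hbound : ∀ j, ‖g j‖ ≤ L) :
    ∀ r : ℕ,
      (Finset.range (r + 1)).inf' Finset.nonempty_range_add_one (fun k => J (x k)) - J xs ≤
        (max L 1 * ‖x 0 - xs‖ ^ 2 + max L 1 * ∑ j ∈ Finset.range (r + 1), (α j) ^ 2)
            / (2 * ∑ j ∈ Finset.range (r + 1), α j)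
          + max L 1 * εhat := by
  intro r
  set Δ := (range (r + 1)).inf' nonempty_range_add_one (fun k => J (x k)) - J xs
  have hS : 0 < ∑ j ∈ range (r + 1), α j := sum_pos (fun j _ => hα j) nonempty_range_add_one
  have hεμ : εhat ≤ max L 1 * εhat := le_mul_of_one_le_left hεhat (le_max_right _ _)
  rw [← sub_le_iff_le_add, le_div_iff₀ (by positivity), ← mul_add]
  rcases le_or_gt Δ εhat with hsmall | hlarge
  · have : 0 ≤ max L 1 * (‖x 0 - xs‖ ^ 2 + ∑ j ∈ range (r + 1), α j ^ 2) := by positivity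
    nlinarith
  have hinner : ∀ j < r + 1, Δ - εhat ≤ ⟪g j, x j - xs⟫ := fun j hj => by
    have hmin := inf'_le (fun k => J (x k)) (mem_range.mpr hj)
    linarith [IsApproxSubgradient.sub_sub_le_inner (hsub j) xs]
  calc (Δ - max L 1 * εhat) * (2 * ∑ j ∈ range (r + 1), α j)
      ≤ 2 * (Δ - εhat) * ∑ j ∈ range (r + 1), α j := by nlinarith
    _ ≤ _ := two_mul_mul_sum_le_of_normalizedStep hstep (fun j => (hα j).le) hbound
        (by linarith) hinner

/-- suboptimality bound for the `ε̂`-subgradient method with scaled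
directions, uniformly bounded subgradients and a global minimizer `x*`. -/
theorem subgradient_method_suboptimality_bound (d : ℕ) (J : EuclideanSpace ℝ (Fin d) → ℝ)
    (xs : EuclideanSpace ℝ (Fin d)) (hxs : ∀ z, J xs ≤ J z)
    (εhat L : ℝ) (hεhat : 0 ≤ εhat) (hL : 0 < L)
    (α : ℕ → ℝ) (hα : ∀ j, 0 < α j)
    (x g : ℕ → EuclideanSpace ℝ (Fin d))
    (hstep : ∀ j, x (j + 1) = x j - (α j / max ‖g j‖ 1) • g j)
    (hsub : ∀ j, ∀ z : EuclideanSpace ℝ (Fin d), J z ≥ J (x j) + ⟪g j, z - x j⟫ - εhat)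
    (hbound : ∀ j, ‖g j‖ ≤ L) :
    ∀ r : ℕ,
      (Finset.range (r + 1)).inf' Finset.nonempty_range_add_one (fun k => J (x k)) - J xs ≤
        (max L 1 * ‖x 0 - xs‖ ^ 2 + max L 1 * ∑ j ∈ Finset.range (r + 1), (α j) ^ 2)
            / (2 * ∑ j ∈ Finset.range (r + 1), α j)
          + max L 1 * εhat :=
  subgradient_method_suboptimality_bound_general d J xs εhat L hεhat α hα x g hstep hsub hbound
end

section
/- Let J : ℝ^d → ℝ and let x* be a global minimizer of J. Let L > 0, μ := max{L, 1}, and let tolerances satisfy 0 ≤ ε̂ and μ ε̂ < ε₂. Let step sizes α_j > 0 satisfy Σ_{j=0}^{∞} α_j = +∞ and Σ_{j=0}^{∞} α_j² < +∞, and let iterates be generated by x^{j+1} := x^j − α_j g_j / max{‖g_j‖, 1}, where each g_j is an ε̂-subgradient of J at x^j with ‖g_j‖ ≤ L. Then there exists a finite index r̄ such that for all r ≥ r̄, min_{0 ≤ k ≤ r} J(x^k) − J(x*) ≤ ε₂. -/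
open scoped RealInnerProductSpace
open Filter Finset

/-!
If every iterate stayed more than `ε₂` above the optimal value, then, with
`δ := ε₂ / max L 1 - ε̂ > 0`, each step would satisfy
`‖x^{j+1} - x*‖² ≤ ‖x^j - x*‖² - 2 δ α_j + α_j²`, because the normalised step has length
between `α_j / max L 1` and `α_j`, and the `ε̂`-subgradient inequality at `x*` gives
`⟪g_j, x^j - x*⟫ ≥ J(x^j) - J(x*) - ε̂ > ε₂ - ε̂`.
Telescoping bounds `2 δ ∑ α_j` by `‖x^0 - x*‖² + ∑ α_j²`, contradicting `∑ α_j = ∞`.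
-/

section NormalizedStep

variable {E : Type*} [NormedAddCommGroup E] [InnerProductSpace ℝ E]

theorem norm_sub_smul_sub_sq (x y g : E) (β : ℝ) :
    ‖x - β • g - y‖ ^ 2 = ‖x - y‖ ^ 2 - 2 * β * ⟪g, x - y⟫ + β ^ 2 * ‖g‖ ^ 2 := by
  rw [show x - β • g - y = (x - y) - β • g by abel, norm_sub_sq_real, real_inner_smul_right,
    real_inner_comm, norm_smul, Real.norm_eq_abs, mul_pow, sq_abs]
  ring

theorem norm_normalizedStep_sub_sq_le_s9 {J : E → ℝ} {x y g : E} {α ε L : ℝ}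
    (hα : 0 ≤ α) (hε : 0 ≤ ε) (hg : ‖g‖ ≤ L)
    (hsub : J y ≥ J x + ⟪g, y - x⟫ - ε) (hgap : 0 ≤ J x - J y) :
    ‖x - (α / max ‖g‖ 1) • g - y‖ ^ 2
      ≤ ‖x - y‖ ^ 2 - 2 * α * ((J x - J y) / max L 1 - ε) + α ^ 2 := by
  set m := max ‖g‖ 1
  set β := α / m
  have hm : 0 < m := lt_max_of_lt_right one_pos
  have hinner : J x - J y - ε ≤ ⟪g, x - y⟫ := by
    rw [← neg_sub x y, inner_neg_right] at hsub
    linarith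
  have hβg : β * ‖g‖ ≤ α := by
    rw [div_mul_eq_mul_div, div_le_iff₀ hm]
    exact mul_le_mul_of_nonneg_left (le_max_left _ _) hα
  have hβ_le : β ≤ α := div_le_self hα (le_max_right _ _)
  have hβ_ge : α / max L 1 ≤ β :=
    div_le_div_of_nonneg_left hα hm (max_le_max_right 1 hg)
  have hdescent : α * ((J x - J y) / max L 1 - ε) ≤ β * ⟪g, x - y⟫ :=
    calc α * ((J x - J y) / max L 1 - ε)
        = α / max L 1 * (J x - J y) - α * ε := by ring
      _ ≤ β * (J x - J y) - β * ε := by gcongr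
      _ = β * (J x - J y - ε) := by ring
      _ ≤ β * ⟪g, x - y⟫ := by gcongr
  have hsq : β ^ 2 * ‖g‖ ^ 2 ≤ α ^ 2 := by
    rw [← mul_pow]
    exact pow_le_pow_left₀ (by positivity) hβg 2
  rw [norm_sub_smul_sub_sq]
  linarith

end NormalizedStep

theorem not_forall_le_sub_mul_add_of_tendsto_sum {D a b : ℕ → ℝ} {c : ℝ}
    (hD : ∀ j, 0 ≤ D j) (hc : 0 < c)
    (ha : Tendsto (fun r => ∑ j ∈ range r, a j) atTop atTop)
    (hb : Summable b) (hb0 : ∀ j, 0 ≤ b j) :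
    ¬ ∀ j, D (j + 1) ≤ D j - c * a j + b j := by
  intro hstep
  have htele : ∀ r, D r + c * ∑ j ∈ range r, a j ≤ D 0 + ∑ j ∈ range r, b j := by
    intro r
    induction r with
    | zero => simp
    | succ n ih =>
      rw [sum_range_succ, sum_range_succ]
      linarith [hstep n]
  have hbounded : ∀ r, ∑ j ∈ range r, a j ≤ (D 0 + ∑' j, b j) / c := fun r => by
    rw [le_div_iff₀ hc]
    linarith [htele r, hD r, hb.sum_le_tsum (range r) (fun j _ => hb0 j)]
  obtain ⟨r, hr⟩ := (ha.eventually_gt_atTop ((D 0 + ∑' j, b j) / c)).exists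
  exact (hbounded r).not_gt hr

theorem subgradient_method_converges_general (d : ℕ) (J : EuclideanSpace ℝ (Fin d) → ℝ)
    (xs : EuclideanSpace ℝ (Fin d))
    (εhat L ε₂ : ℝ) (hεhat : 0 ≤ εhat) (hε₂ : max L 1 * εhat < ε₂)
    (α : ℕ → ℝ) (hα : ∀ j, 0 < α j)
    (hdiv : Tendsto (fun r => ∑ j ∈ Finset.range r, α j) atTop atTop)
    (hsq : Summable fun j => (α j) ^ 2)
    (x g : ℕ → EuclideanSpace ℝ (Fin d))
    (hstep : ∀ j, x (j + 1) = x j - (α j / max ‖g j‖ 1) • g j)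
    (hsub : ∀ j, ∀ z : EuclideanSpace ℝ (Fin d), J z ≥ J (x j) + ⟪g j, z - x j⟫ - εhat)
    (hbound : ∀ j, ‖g j‖ ≤ L) :
    ∃ rbar : ℕ, ∀ r ≥ rbar,
      (Finset.range (r + 1)).inf' Finset.nonempty_range_add_one (fun k => J (x k)) - J xs ≤ ε₂ := by
  have hμ : 0 < max L 1 := lt_max_of_lt_right one_pos
  have hδ : 0 < ε₂ / max L 1 - εhat := by
    rw [sub_pos, lt_div_iff₀ hμ, mul_comm]
    exact hε₂
  obtain ⟨k, hk⟩ : ∃ k, J (x k) - J xs ≤ ε₂ := by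
    by_contra! hfar
    refine not_forall_le_sub_mul_add_of_tendsto_sum (D := fun j => ‖x j - xs‖ ^ 2)
      (fun _ => sq_nonneg _) (mul_pos two_pos hδ) hdiv hsq (fun _ => sq_nonneg _) fun j => ?_
    have hgap : ε₂ / max L 1 ≤ (J (x j) - J xs) / max L 1 := by gcongr; exact (hfar j).le
    have hdescent : 2 * (ε₂ / max L 1 - εhat) * α j
        ≤ 2 * α j * ((J (x j) - J xs) / max L 1 - εhat) := by
      nlinarith [hα j]
    have hdist := norm_normalizedStep_sub_sq_le_s9 (hα j).le hεhat (hbound j) (hsub j xs)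
      ((mul_nonneg hμ.le hεhat).trans_lt (hε₂.trans (hfar j))).le
    simp only [hstep j]
    linarith
  exact ⟨k, fun r hr =>
    (sub_le_sub_right (inf'_le _ (mem_range.2 (by omega))) _).trans hk⟩

/-- convergence of the `ε̂`-subgradient method with divergent but
square-summable step sizes: the running best value eventually becomes (and stays)
`ε₂`-close to the optimal value. -/
theorem subgradient_method_converges (d : ℕ) (J : EuclideanSpace ℝ (Fin d) → ℝ)
    (xs : EuclideanSpace ℝ (Fin d)) (hxs : ∀ z, J xs ≤ J z)
    (εhat L ε₂ : ℝ) (hεhat : 0 ≤ εhat) (hL : 0 < L) (hε₂ : max L 1 * εhat < ε₂)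
    (α : ℕ → ℝ) (hα : ∀ j, 0 < α j)
    (hdiv : Tendsto (fun r => ∑ j ∈ Finset.range r, α j) atTop atTop)
    (hsq : Summable fun j => (α j) ^ 2)
    (x g : ℕ → EuclideanSpace ℝ (Fin d))
    (hstep : ∀ j, x (j + 1) = x j - (α j / max ‖g j‖ 1) • g j)
    (hsub : ∀ j, ∀ z : EuclideanSpace ℝ (Fin d), J z ≥ J (x j) + ⟪g j, z - x j⟫ - εhat)
    (hbound : ∀ j, ‖g j‖ ≤ L) :
    ∃ rbar : ℕ, ∀ r ≥ rbar,
      (Finset.range (r + 1)).inf' Finset.nonempty_range_add_one (fun k => J (x k)) - J xs ≤ ε₂ :=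
  subgradient_method_converges_general d J xs εhat L ε₂ hεhat hε₂ α hα hdiv hsq x g hstep hsub
    hbound
end
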